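/- arXiv:1409.4601 — 10 statements merged into one kernel-verified Lean document; each statement's English description precedes it below -/
import Mathlib

section
/- The set 𝒞 is a function clone: for every n ≥ 1 and every i : Fin n, the projection u ↦ u i belongs to 𝒞ₙ, and for all m, n ≥ 1, every f ∈ 𝒞ₙ, and all g₁, …, gₙ ∈ 𝒞ₘ, the composite function u ↦ f(g₁ u, …, gₙ u) belongs to 𝒞ₘ. -/
/-- `f` preserves `<` (is a polymorphism of `(ℚ, <)`). -/
def PreservesLt {n : ℕ} (f : (Fin n → ℚ) → ℚ) : Prop :=
  ∀ u v : Fin n → ℚ, (∀ j, u j < v j) → f u < f v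

/-- `f` eventually acts as the order automorphism `α` at coordinate `i` above threshold `a`. -/
def EventuallyActsAs {n : ℕ} (f : (Fin n → ℚ) → ℚ) (α : ℚ ≃o ℚ) (i : Fin n) (a : ℚ) : Prop :=
  ∀ u : Fin n → ℚ, (∀ j, a < u j) → f u = α (u i)

/-- The clone `𝒞`: `n`-ary functions preserving `<` that eventually act as some order
automorphism at some coordinate above some threshold. -/
def CloneC (n : ℕ) : Set ((Fin n → ℚ) → ℚ) :=
  {f | PreservesLt f ∧ ∃ (i : Fin n) (a : ℚ) (α : ℚ ≃o ℚ), EventuallyActsAs f α i a}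

theorem cloneC_isClone :
    (∀ n : ℕ, 1 ≤ n → ∀ i : Fin n, (fun u : Fin n → ℚ => u i) ∈ CloneC n) ∧
    (∀ m n : ℕ, 1 ≤ m → 1 ≤ n → ∀ f ∈ CloneC n, ∀ g : Fin n → ((Fin m → ℚ) → ℚ),
      (∀ k, g k ∈ CloneC m) →
      (fun u : Fin m → ℚ => f (fun k => g k u)) ∈ CloneC m) := by
  constructor
  · intro n hn i
    exact ⟨fun u v h => h i, i, 0, OrderIso.refl ℚ, fun u _ => rfl⟩
  · intro m n hm hn f hf g hg
    obtain ⟨hfp, i, a, α, hfe⟩ := hf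
    choose hgp ig ag αg hge using hg
    have hne : (Finset.univ : Finset (Fin n)).Nonempty := ⟨⟨0, hn⟩, Finset.mem_univ _⟩
    set A := Finset.univ.sup' hne (fun k => max (ag k) ((αg k).symm a)) with hA
    refine ⟨?_, ig i, A, (αg i).trans α, ?_⟩
    · intro u v h
      exact hfp _ _ fun k => hgp k u v h
    · intro u hu
      have hA' : ∀ k, max (ag k) ((αg k).symm a) ≤ A :=
        fun k => hA ▸ Finset.le_sup' (fun k => max (ag k) ((αg k).symm a)) (Finset.mem_univ k)
      have h1 : ∀ k, ∀ j, ag k < u j :=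
        fun k j => lt_of_le_of_lt (le_trans (le_max_left _ _) (hA' k)) (hu j)
      have h2 : ∀ k, a < g k u := by
        intro k
        rw [hge k u (h1 k)]
        have hlt : (αg k).symm a < u (ig k) :=
          lt_of_le_of_lt (le_trans (le_max_right _ _) (hA' k)) (hu _)
        have := (αg k).strictMono hlt
        simpa using this
      show f (fun k => g k u) = _
      rw [hfe _ h2, hge i u (h1 i)]
      rfl
end

section
/- The eventual coordinate and the eventual automorphism of a member of 𝒞 are essentially unique: if f : (Fin n → ℚ) → ℚ eventually acts as the order automorphism α at coordinate i above threshold a, and also eventually acts as the order automorphism β at coordinate j above threshold b, then i = j and α x = β x for every rational x > max a b. -/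
theorem eventual_data_unique {n : ℕ} (f : (Fin n → ℚ) → ℚ) (α β : ℚ ≃o ℚ)
    (i j : Fin n) (a b : ℚ)
    (hα : EventuallyActsAs f α i a) (hβ : EventuallyActsAs f β j b) :
    i = j ∧ ∀ x : ℚ, max a b < x → α x = β x := by
  have key : ∀ x : ℚ, max a b < x → α x = β x := by
    intro x hx
    have h1 := hα (fun _ => x) (fun k => lt_of_le_of_lt (le_max_left a b) hx)
    have h2 := hβ (fun _ => x) (fun k => lt_of_le_of_lt (le_max_right a b) hx)
    rw [h1] at h2
    exact h2
  refine ⟨?_, key⟩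
  by_contra hij
  set c : ℚ := max a b + 1 with hc
  have hcab : max a b < c := lt_add_one _
  set u : Fin n → ℚ := Function.update (fun _ => c) i (c + 1) with hu
  have hcu : ∀ k, max a b < u k := by
    intro k
    by_cases h : k = i
    · subst h
      rw [hu, Function.update_self]
      linarith
    · rw [hu, Function.update_of_ne h]
      exact hcab
  have h1 : f u = α (u i) := hα u (fun k => lt_of_le_of_lt (le_max_left a b) (hcu k))
  have h2 : f u = β (u j) := hβ u (fun k => lt_of_le_of_lt (le_max_right a b) (hcu k))
  have hui : u i = c + 1 := Function.update_self _ _ _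
  have huj : u j = c := Function.update_of_ne (fun h => hij h.symm) _ _
  have : α (c + 1) = β c := by rw [hui] at h1; rw [huj] at h2; rw [h1] at h2; exact h2
  have hbc : β c = α c := (key c hcab).symm
  rw [hbc] at this
  have : (c + 1 : ℚ) = c := α.injective this
  linarith
end

section
/- Composition law for eventual behaviour: suppose f : (Fin n → ℚ) → ℚ eventually acts as the order automorphism α at coordinate i above threshold a, and for each k : Fin n the function gₖ : (Fin m → ℚ) → ℚ eventually acts as the order automorphism αₖ at coordinate jₖ above threshold aₖ. Then there exists a threshold b : ℚ such that the composite u ↦ f(g₁ u, …, gₙ u) eventually acts as the order automorphism α ∘ αᵢ at coordinate jᵢ above b. -/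
theorem eventual_comp {m n : ℕ} (f : (Fin n → ℚ) → ℚ) (α : ℚ ≃o ℚ) (i : Fin n) (a : ℚ)
    (hf : EventuallyActsAs f α i a)
    (g : Fin n → ((Fin m → ℚ) → ℚ)) (β : Fin n → (ℚ ≃o ℚ)) (j : Fin n → Fin m)
    (c : Fin n → ℚ) (hg : ∀ k, EventuallyActsAs (g k) (β k) (j k) (c k)) :
    ∃ b : ℚ,
      EventuallyActsAs (fun u : Fin m → ℚ => f (fun k => g k u)) ((β i).trans α) (j i) b := by
  haveI : Nonempty (Fin n) := ⟨i⟩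
  set b : ℚ := Finset.univ.sup' Finset.univ_nonempty
    (fun k : Fin n => max (c k) ((β k).symm a)) with hb
  refine ⟨b, fun u hu => ?_⟩
  have hble : ∀ k : Fin n, max (c k) ((β k).symm a) ≤ b := fun k =>
    hb ▸ Finset.le_sup' (fun k : Fin n => max (c k) ((β k).symm a)) (Finset.mem_univ k)
  have hgk : ∀ k, g k u = β k (u (j k)) := fun k =>
    hg k u (fun l => lt_of_le_of_lt (le_trans (le_max_left _ _) (hble k)) (hu l))
  have ha : ∀ k, a < g k u := fun k => by
    rw [hgk k]
    have : (β k).symm a < u (j k) :=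
      lt_of_le_of_lt (le_trans (le_max_right _ _) (hble k)) (hu (j k))
    simpa using (β k).lt_iff_lt.2 this
  simp only
  rw [hf _ ha, hgk i]
  rfl
end

section
/- The map ξ sending each f ∈ 𝒞ₙ to the unique coordinate i : Fin n at which f eventually acts as some order automorphism above some threshold is a well-defined projection-valued clone homomorphism on 𝒞; in particular, 𝒞 admits a projective homomorphism (a clone homomorphism onto the trivial projection clone 𝟏). -/
/-- A projection-valued clone homomorphism on `𝒞`: a family of maps `ξ n : 𝒞ₙ → Fin n`
sending projections to their index and compatible with composition (this encodes a clone
homomorphism from `𝒞` to the projection clone `𝟏`). -/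
structure ProjHom where
  ξ : ∀ (n : ℕ) (f : (Fin n → ℚ) → ℚ), f ∈ CloneC n → Fin n
  proj_eq : ∀ (n : ℕ) (i : Fin n) (h : (fun u : Fin n → ℚ => u i) ∈ CloneC n),
    ξ n (fun u => u i) h = i
  comp_eq : ∀ (m n : ℕ) (f : (Fin n → ℚ) → ℚ) (hf : f ∈ CloneC n)
    (g : Fin n → ((Fin m → ℚ) → ℚ)) (hg : ∀ k, g k ∈ CloneC m)
    (hc : (fun u : Fin m → ℚ => f (fun k => g k u)) ∈ CloneC m),
    ξ m (fun u => f (fun k => g k u)) hc = ξ m (g (ξ n f hf)) (hg (ξ n f hf))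

/-- Uniqueness of the coordinate at which `f` eventually acts. -/
lemma eventually_coord_unique {n : ℕ} {f : (Fin n → ℚ) → ℚ} {α β : ℚ ≃o ℚ}
    {i j : Fin n} {a b : ℚ} (hα : EventuallyActsAs f α i a)
    (hβ : EventuallyActsAs f β j b) : i = j := by
  by_contra hij
  set c : ℚ := max a b + 1 with hc
  have hca : a < c := lt_of_le_of_lt (le_max_left a b) (by linarith)
  have hcb : b < c := lt_of_le_of_lt (le_max_right a b) (by linarith)
  set u : Fin n → ℚ := fun _ => c with hu
  set u' : Fin n → ℚ := Function.update u i (c + 1) with hu'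
  have hu'j : ∀ l, c ≤ u' l := by
    intro l
    by_cases h : l = i
    · subst h; simp only [hu', Function.update_self]; linarith
    · simp [hu', Function.update_of_ne h, hu]
  have h1 : f u = α c := hα u (fun _ => hca)
  have h2 : f u = β c := hβ u (fun _ => hcb)
  have h3 : f u' = α (c + 1) := by
    have := hα u' (fun l => lt_of_lt_of_le hca (hu'j l))
    simpa [hu', Function.update_self] using this
  have h4 : f u' = β c := by
    have := hβ u' (fun l => lt_of_lt_of_le hcb (hu'j l))
    rwa [show u' j = c from by
      simp [hu', Function.update_of_ne (fun h : j = i => hij h.symm), hu]] at this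
  have : α c = α (c + 1) := by rw [← h1, h2, ← h4, h3]
  have hlt : α c < α (c + 1) := α.strictMono (by linarith)
  exact absurd this (ne_of_lt hlt)

theorem exists_projHom :
    ∃ H : ProjHom, ∀ (n : ℕ) (f : (Fin n → ℚ) → ℚ) (hf : f ∈ CloneC n)
      (i : Fin n) (α : ℚ ≃o ℚ) (a : ℚ),
      EventuallyActsAs f α i a → H.ξ n f hf = i := by
  have key : ∀ (n : ℕ) (f : (Fin n → ℚ) → ℚ) (hf : f ∈ CloneC n),
      ∃ a α, EventuallyActsAs f α hf.2.choose a := by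
    intro n f hf
    exact hf.2.choose_spec
  refine ⟨⟨fun n f hf => hf.2.choose, ?_, ?_⟩, ?_⟩
  · intro n i h
    obtain ⟨a, α, hE⟩ := key n _ h
    have hproj : EventuallyActsAs (fun u : Fin n → ℚ => u i) (OrderIso.refl ℚ) i 0 :=
      fun u _ => rfl
    exact eventually_coord_unique hE hproj
  · intro m n f hf g hg hc
    -- data for f
    obtain ⟨a, α, hE⟩ := key n f hf
    set i := hf.2.choose with hi
    -- data for each g k
    have hgex : ∀ k, ∃ (j : Fin m) (b : ℚ) (β : ℚ ≃o ℚ), EventuallyActsAs (g k) β j b :=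
      fun k => (hg k).2
    choose j b β hgE using hgex
    haveI : Nonempty (Fin n) := ⟨i⟩
    set T : ℚ := Finset.univ.sup' Finset.univ_nonempty
      (fun k : Fin n => max (b k) ((β k).symm a)) with hT
    have hcomp : EventuallyActsAs (fun u : Fin m → ℚ => f (fun k => g k u))
        ((β i).trans α) (j i) T := by
      intro u hu
      have hgu : ∀ k, g k u = β k (u (j k)) := by
        intro k
        refine hgE k u (fun l => ?_)
        have : b k ≤ T := le_trans (le_max_left _ _)
          (Finset.le_sup' (fun k : Fin n => max (b k) ((β k).symm a)) (Finset.mem_univ k))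
        exact lt_of_le_of_lt this (hu l)
      have hga : ∀ k, a < g k u := by
        intro k
        rw [hgu k]
        have h1 : (β k).symm a ≤ T := le_trans (le_max_right _ _)
          (Finset.le_sup' (fun k : Fin n => max (b k) ((β k).symm a)) (Finset.mem_univ k))
        have h2 : (β k).symm a < u (j k) := lt_of_le_of_lt h1 (hu (j k))
        have := (β k).strictMono h2
        simpa using this
      have := hE (fun k => g k u) hga
      simp only [this, hgu i]
      rfl
    -- conclude
    obtain ⟨a', α', hE'⟩ := key m _ hc
    obtain ⟨a'', α'', hE''⟩ := key m (g i) (hg i)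
    have e1 : hc.2.choose = j i := eventually_coord_unique hE' hcomp
    have e2 : (hg i).2.choose = j i := eventually_coord_unique hE'' (hgE i)
    exact e1.trans e2.symm
  · intro n f hf i α a hE
    obtain ⟨a', α', hE'⟩ := key n f hf
    exact eventually_coord_unique hE' hE
end

section
/- Uniqueness of the projective homomorphism on 𝒞: every projection-valued clone homomorphism ξ on 𝒞 satisfies ξₙ(f) = i whenever f ∈ 𝒞ₙ eventually acts as some order automorphism at coordinate i above some threshold. Consequently, there is exactly one projection-valued clone homomorphism on 𝒞. -/
/-!
Let `f ∈ 𝒞ₙ` agree with `α (u i)` whenever all coordinates of `u` exceed `a`. Precompose every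
coordinate of `f` with a strictly increasing map `squash a : ℚ → (a, ∞)` that is the identity on
`[a + 1, ∞)`. The composite equals `u ↦ α (squash a (u i))`, a unary function applied to the
`i`-th projection, so `ξ` sends it to `i`. On the other hand, the composition law sends it to the
value of `ξ` at `u ↦ squash a (u (ξ f))`, which is `ξ f` for the same reason.
-/

def squash (a x : ℚ) : ℚ :=
  if a + 1 ≤ x then x else a + (a + 2 - x)⁻¹

lemma lt_squash (a x : ℚ) : a < squash a x := by
  unfold squash
  split_ifs with h
  · linarith
  · have : 0 < a + 2 - x := by linarith
    linarith [inv_pos.2 this]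

lemma squash_of_le {a x : ℚ} (h : a + 1 ≤ x) : squash a x = x := if_pos h

lemma strictMono_squash (a : ℚ) : StrictMono (squash a) := by
  intro x y hxy
  unfold squash
  split_ifs with hx hy hy
  · exact hxy
  · linarith
  · have : (a + 2 - x)⁻¹ < 1 := inv_lt_one_of_one_lt₀ (by linarith)
    linarith
  · have : (a + 2 - x)⁻¹ < (a + 2 - y)⁻¹ := by
      apply inv_strictAnti₀ <;> linarith
    linarith

lemma comp_proj_mem_cloneC {m : ℕ} {β : ℚ → ℚ} (hβ : StrictMono β) (γ : ℚ ≃o ℚ) (b : ℚ)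
    (hγ : ∀ x, b < x → β x = γ x) (k : Fin m) : (fun u : Fin m → ℚ => β (u k)) ∈ CloneC m :=
  ⟨fun _ _ h => hβ (h k), k, b, γ, fun _ hu => hγ _ (hu k)⟩

lemma proj_mem_cloneC {m : ℕ} (k : Fin m) : (fun u : Fin m → ℚ => u k) ∈ CloneC m :=
  comp_proj_mem_cloneC strictMono_id (OrderIso.refl ℚ) 0 (fun _ _ => rfl) k

lemma squash_comp_proj_mem_cloneC {m : ℕ} (a : ℚ) (k : Fin m) :
    (fun u : Fin m → ℚ => squash a (u k)) ∈ CloneC m :=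
  comp_proj_mem_cloneC (strictMono_squash a) (OrderIso.refl ℚ) (a + 1)
    (fun _ hx => squash_of_le hx.le) k

lemma orderIso_squash_comp_proj_mem_cloneC {m : ℕ} (a : ℚ) (γ : ℚ ≃o ℚ) (k : Fin m) :
    (fun u : Fin m → ℚ => γ (squash a (u k))) ∈ CloneC m :=
  comp_proj_mem_cloneC (γ.strictMono.comp (strictMono_squash a)) γ (a + 1)
    (fun _ hx => congrArg γ (squash_of_le hx.le)) k

namespace ProjHom

lemma ext {H H' : ProjHom} (h : H.ξ = H'.ξ) : H = H' := by
  cases H; cases H'; cases h; rfl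

lemma ξ_congr (H : ProjHom) {n : ℕ} {f f' : (Fin n → ℚ) → ℚ} (h : f = f')
    (hf : f ∈ CloneC n) (hf' : f' ∈ CloneC n) : H.ξ n f hf = H.ξ n f' hf' := by
  subst h; rfl

/-- `u ↦ β (u k)` is `v ↦ β (v 0)` composed with the `k`-th projection. -/
lemma ξ_comp_proj (H : ProjHom) {m : ℕ} (β : ℚ → ℚ)
    (hβ : (fun v : Fin 1 → ℚ => β (v 0)) ∈ CloneC 1) (k : Fin m)
    (h : (fun u : Fin m → ℚ => β (u k)) ∈ CloneC m) : H.ξ m (fun u => β (u k)) h = k := by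
  rw [H.comp_eq m 1 _ hβ (fun _ u => u k) (fun _ => proj_mem_cloneC k) h]
  exact H.proj_eq m k (proj_mem_cloneC k)

theorem ξ_eq_of_eventuallyActsAs (H : ProjHom) {n : ℕ} {f : (Fin n → ℚ) → ℚ}
    (hf : f ∈ CloneC n) {i : Fin n} {α : ℚ ≃o ℚ} {a : ℚ} (hfα : EventuallyActsAs f α i a) :
    H.ξ n f hf = i := by
  have hcomp : (fun u : Fin n → ℚ => f (fun k => squash a (u k)))
      = fun u => α (squash a (u i)) :=
    funext fun u => hfα _ fun j => lt_squash a (u j)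
  have hmem := orderIso_squash_comp_proj_mem_cloneC a α i
  have hc : (fun u : Fin n → ℚ => f (fun k => squash a (u k))) ∈ CloneC n := hcomp ▸ hmem
  calc H.ξ n f hf
      = H.ξ n (fun u => squash a (u (H.ξ n f hf))) (squash_comp_proj_mem_cloneC a _) :=
        (H.ξ_comp_proj (squash a) (squash_comp_proj_mem_cloneC a 0) _ _).symm
    _ = H.ξ n (fun u => f (fun k => squash a (u k))) hc :=
        (H.comp_eq n n f hf _ (squash_comp_proj_mem_cloneC a) hc).symm
    _ = H.ξ n (fun u => α (squash a (u i))) hmem := H.ξ_congr hcomp hc hmem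
    _ = i :=
        H.ξ_comp_proj (fun x => α (squash a x)) (orderIso_squash_comp_proj_mem_cloneC a α 0) i hmem

end ProjHom

theorem projHom_unique :
    (∀ (H : ProjHom) (n : ℕ) (f : (Fin n → ℚ) → ℚ) (hf : f ∈ CloneC n)
      (i : Fin n) (α : ℚ ≃o ℚ) (a : ℚ),
      EventuallyActsAs f α i a → H.ξ n f hf = i) ∧
    ∀ H H' : ProjHom, H = H' := by
  refine ⟨fun H _ _ hf _ _ _ hfα => H.ξ_eq_of_eventuallyActsAs hf hfα, fun H H' => ?_⟩
  refine ProjHom.ext (funext fun n => funext fun f => funext fun hf => ?_)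
  obtain ⟨-, i, a, α, hfα⟩ := id hf
  rw [H.ξ_eq_of_eventuallyActsAs _ hfα, H'.ξ_eq_of_eventuallyActsAs _ hfα]
end

section
/- Factorization through unary members: if f ∈ 𝒞ₙ eventually acts as the order automorphism α at coordinate i above threshold a, then there exist unary functions g₁, …, gₙ ∈ 𝒞₁ and a strictly increasing unary function h ∈ 𝒞₁ such that f(g₁(u 0), …, gₙ(u (n-1))) = h(u i) for all u : Fin n → ℚ; that is, the composite of f with suitable unary members of 𝒞 depends injectively on the i-th coordinate alone. -/
/-- Membership of a unary function `ℚ → ℚ` in `𝒞₁`, identifying `Fin 1 → ℚ` with `ℚ`. -/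
def MemC1 (g : ℚ → ℚ) : Prop :=
  StrictMono g ∧ ∃ (α : ℚ ≃o ℚ) (a : ℚ), ∀ x : ℚ, a < x → g x = α x

/-- Auxiliary squashing function: strictly monotone, image in `(a, ∞)`, identity above `a+1`. -/
def gAux (a x : ℚ) : ℚ := if x ≤ a + 1 then a + 1 / (a + 2 - x) else x

lemma gAux_gt (a x : ℚ) : a < gAux a x := by
  unfold gAux
  split_ifs with h
  · have h2 : (0:ℚ) < a + 2 - x := by linarith
    have : 0 < 1 / (a + 2 - x) := by positivity
    linarith
  · linarith

lemma gAux_le (a x : ℚ) (h : x ≤ a + 1) : gAux a x ≤ a + 1 := by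
  unfold gAux
  rw [if_pos h]
  have h2 : (1:ℚ) ≤ a + 2 - x := by linarith
  have : 1 / (a + 2 - x) ≤ 1 := by
    rw [div_le_one (by linarith)]; linarith
  linarith

lemma gAux_eq (a x : ℚ) (h : a + 1 < x) : gAux a x = x := by
  unfold gAux; rw [if_neg (not_le.mpr h)]

lemma gAux_strictMono (a : ℚ) : StrictMono (gAux a) := by
  intro x y hxy
  by_cases hy : y ≤ a + 1
  · have hx : x ≤ a + 1 := le_trans hxy.le hy
    unfold gAux
    rw [if_pos hx, if_pos hy]
    have h2x : (0:ℚ) < a + 2 - x := by linarith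
    have h2y : (0:ℚ) < a + 2 - y := by linarith
    have : 1 / (a + 2 - x) < 1 / (a + 2 - y) :=
      one_div_lt_one_div_of_lt h2y (by linarith)
    linarith
  · push_neg at hy
    by_cases hx : x ≤ a + 1
    · have := gAux_le a x hx
      rw [gAux_eq a y hy]
      linarith
    · push_neg at hx
      rw [gAux_eq a x hx, gAux_eq a y hy]
      exact hxy

theorem factor_through_unary {n : ℕ} (f : (Fin n → ℚ) → ℚ) (hf : f ∈ CloneC n)
    (α : ℚ ≃o ℚ) (i : Fin n) (a : ℚ) (hev : EventuallyActsAs f α i a) :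
    ∃ g : Fin n → (ℚ → ℚ), (∀ k, MemC1 (g k)) ∧
      ∃ h : ℚ → ℚ, MemC1 h ∧ StrictMono h ∧
        ∀ u : Fin n → ℚ, f (fun k => g k (u k)) = h (u i) := by
  refine ⟨fun _ => gAux a, fun k => ⟨gAux_strictMono a, OrderIso.refl ℚ, a + 1,
    fun x hx => gAux_eq a x hx⟩, fun x => α (gAux a x), ?_, ?_, ?_⟩
  · exact ⟨fun x y hxy => α.strictMono (gAux_strictMono a hxy), α, a + 1,
      fun x hx => by show α (gAux a x) = α x; rw [gAux_eq a x hx]⟩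
  · exact fun x y hxy => α.strictMono (gAux_strictMono a hxy)
  · intro u
    exact hev (fun k => gAux a (u k)) (fun j => gAux_gt a (u j))
end

section
/- Interpolation within 𝒞 with an arbitrary target coordinate: for every f ∈ 𝒞ₙ, every finite set A of tuples in Fin n → ℚ, and every coordinate i : Fin n, there exists g ∈ 𝒞ₙ such that g eventually acts as some order automorphism at coordinate i above some threshold and g u = f u for all u ∈ A. Hence the unique projection-valued clone homomorphism on 𝒞 is not determined by the restriction of a function to any finite set. -/
/-!
Since `f ∈ 𝒞ₙ` eventually acts as an automorphism at some coordinate, `f` eventually exceeds every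
bound `c`. Shift that automorphism up to `β` with `f u ≤ β (u i)` on `A`, and take `c` above every
`β (u i)`, `u ∈ A`. Then `min (β (u i)) (f u + max 0 (β (u i) - c))` preserves `<`, equals `f` on
`A` (where the correction term vanishes), and equals `β (u i)` wherever `f u ≥ c`.
-/

section PreservesLt

variable {n : ℕ}

theorem preservesLt_comp_eval {φ : ℚ → ℚ} (hφ : StrictMono φ) (i : Fin n) :
    PreservesLt fun u : Fin n → ℚ => φ (u i) :=
  fun _ _ h => hφ (h i)

theorem PreservesLt.min {f g : (Fin n → ℚ) → ℚ} (hf : PreservesLt f) (hg : PreservesLt g) :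
    PreservesLt fun u => min (f u) (g u) :=
  fun u v h => min_lt_min (hf u v h) (hg u v h)

theorem PreservesLt.add_comp_eval {f : (Fin n → ℚ) → ℚ} (hf : PreservesLt f) {φ : ℚ → ℚ}
    (hφ : Monotone φ) (i : Fin n) : PreservesLt fun u => f u + φ (u i) :=
  fun u v h => add_lt_add_of_lt_of_le (hf u v h) (hφ (h i).le)

end PreservesLt

theorem EventuallyActsAs.exists_forall_le {n : ℕ} {f : (Fin n → ℚ) → ℚ} {α : ℚ ≃o ℚ}
    {i : Fin n} {a : ℚ} (h : EventuallyActsAs f α i a) (c : ℚ) :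
    ∃ b, ∀ u, (∀ j, b < u j) → c ≤ f u := by
  refine ⟨max a (α.symm c), fun u hu => ?_⟩
  rw [h u fun j => (le_max_left _ _).trans_lt (hu j)]
  exact α.symm_apply_le.mp ((le_max_right _ _).trans (hu i).le)

section Splice

variable {n : ℕ} (f : (Fin n → ℚ) → ℚ) (β : ℚ ≃o ℚ) (i : Fin n) (c : ℚ)

def splice (u : Fin n → ℚ) : ℚ :=
  min (β (u i)) (f u + max 0 (β (u i) - c))

variable {f β i c}

theorem PreservesLt.splice (hf : PreservesLt f) : PreservesLt (splice f β i c) :=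
  (preservesLt_comp_eval β.strictMono i).min <|
    hf.add_comp_eval (fun _ _ h => max_le_max le_rfl (sub_le_sub_right (β.monotone h) c)) i

theorem splice_eq_left {u : Fin n → ℚ} (hfu : f u ≤ β (u i)) (hc : β (u i) ≤ c) :
    splice f β i c u = f u := by
  simp [splice, max_eq_left (sub_nonpos.mpr hc), hfu]

theorem splice_eq_right {u : Fin n → ℚ} (hc : c ≤ f u) : splice f β i c u = β (u i) :=
  min_eq_left (by linarith [le_max_right 0 (β (u i) - c)])

end Splice

theorem interpolation_any_coordinate {n : ℕ} (f : (Fin n → ℚ) → ℚ) (hf : f ∈ CloneC n)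
    (A : Finset (Fin n → ℚ)) (i : Fin n) :
    ∃ g : (Fin n → ℚ) → ℚ, g ∈ CloneC n ∧
      (∃ (α : ℚ ≃o ℚ) (a : ℚ), EventuallyActsAs g α i a) ∧
      ∀ u ∈ A, g u = f u := by
  obtain ⟨hpf, _, _, α, hα⟩ := hf
  obtain ⟨K, hK⟩ := (A.image fun u => f u - α (u i)).exists_le
  let β : ℚ ≃o ℚ := α.trans (OrderIso.addRight K)
  obtain ⟨c, hc⟩ := (A.image fun u => β (u i)).exists_le
  obtain ⟨a, ha⟩ := hα.exists_forall_le c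
  have hev : EventuallyActsAs (splice f β i c) β i a := fun u hu => splice_eq_right (ha u hu)
  refine ⟨splice f β i c, ⟨hpf.splice, i, a, β, hev⟩, ⟨β, a, hev⟩, fun u hu => ?_⟩
  have hfu : f u - α (u i) ≤ K := hK _ (Finset.mem_image_of_mem _ hu)
  exact splice_eq_left (by change f u ≤ α (u i) + K; linarith) (hc _ (Finset.mem_image_of_mem _ hu))
end

section
/- No projection-valued clone homomorphism on 𝒞 is continuous with respect to pointwise convergence: for every projection-valued clone homomorphism ξ on 𝒞 there exist n ≥ 2, f ∈ 𝒞ₙ, and i : Fin n with i ≠ ξₙ(f), such that for every finite set A of tuples in Fin n → ℚ there exists g ∈ 𝒞ₙ with g u = f u for all u ∈ A and ξₙ(g) = i. -/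
/-! ### Auxiliary functions -/

/-- Squash: identity below `a`, maps `(a,∞)` strictly increasingly into `(a, a+1)`. -/
def sqz (a t : ℚ) : ℚ := if t ≤ a then t else a + (t - a) / (1 + (t - a))

/-- Lift: identity above `c`, maps `(-∞,c)` strictly increasingly into `(c-1, c)`. -/
def lf (c y : ℚ) : ℚ := if c ≤ y then y else c - (c - y) / (1 + (c - y))

lemma sq_eq_of_le {a t : ℚ} (h : t ≤ a) : sqz a t = t := if_pos h

lemma sq_lt (a t : ℚ) : sqz a t < a + 1 := by
  unfold sqz; split
  · linarith
  · rename_i h; push_neg at h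
    have h1 : (0:ℚ) < 1 + (t - a) := by linarith
    have : (t - a) / (1 + (t - a)) < 1 := by rw [div_lt_one h1]; linarith
    linarith

lemma aux_div_lt {s s' : ℚ} (h0 : 0 < s) (h1 : s < s') :
    s / (1 + s) < s' / (1 + s') := by
  rw [div_lt_div_iff₀ (by linarith) (by linarith)]
  nlinarith

lemma sq_strictMono (a : ℚ) : StrictMono (sqz a) := by
  intro s t hst
  unfold sqz
  split <;> split
  · exact hst
  · rename_i h1 h2; push_neg at h2
    have : (0:ℚ) < (t - a) / (1 + (t - a)) := by
      apply div_pos <;> linarith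
    linarith
  · rename_i h1 h2; push_neg at h1; linarith
  · rename_i h1 h2; push_neg at h1 h2
    have := aux_div_lt (s := s - a) (s' := t - a) (by linarith) (by linarith)
    linarith

lemma lf_eq_of_le {c y : ℚ} (h : c ≤ y) : lf c y = y := if_pos h

lemma lf_gt (c y : ℚ) : c - 1 < lf c y := by
  unfold lf; split
  · linarith
  · rename_i h; push_neg at h
    have h1 : (0:ℚ) < 1 + (c - y) := by linarith
    have : (c - y) / (1 + (c - y)) < 1 := by rw [div_lt_one h1]; linarith
    linarith

lemma lf_strictMono (c : ℚ) : StrictMono (lf c) := by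
  intro s t hst
  unfold lf
  split <;> split
  · exact hst
  · rename_i h1 h2; push_neg at h2; linarith
  · rename_i h1 h2; push_neg at h1
    have : (0:ℚ) < (c - s) / (1 + (c - s)) := by
      apply div_pos <;> linarith
    linarith
  · rename_i h1 h2; push_neg at h1 h2
    have := aux_div_lt (s := c - t) (s' := c - s) (by linarith) (by linarith)
    linarith

/-! ### Membership lemmas -/

lemma proj_mem (n : ℕ) (i : Fin n) : (fun u : Fin n → ℚ => u i) ∈ CloneC n :=
  ⟨fun _ _ h => h i, i, 0, OrderIso.refl ℚ, fun _ _ => rfl⟩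

lemma g_mem (a M : ℚ) (hM : 0 ≤ M) :
    (fun u : Fin 2 → ℚ => max (sqz a (u 0)) (u 1 - M)) ∈ CloneC 2 := by
  refine ⟨?_, 1, M + a + 1, OrderIso.addRight (-M), ?_⟩
  · intro u v h
    exact max_lt_max (sq_strictMono a (h 0)) (by linarith [h 1])
  · intro u hu
    have h1 : sqz a (u 0) ≤ u 1 - M := by
      have := sq_lt a (u 0); have := hu 1; linarith
    show sqz a (u 0) ⊔ (u 1 - M) = _
    rw [max_eq_right h1]
    simp [sub_eq_add_neg]

lemma lfp_mem (c : ℚ) : (fun u : Fin 2 → ℚ => lf c (u 1)) ∈ CloneC 2 := by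
  refine ⟨fun u v h => lf_strictMono c (h 1), 1, c, OrderIso.refl ℚ, ?_⟩
  intro u hu
  show lf c (u 1) = _
  rw [lf_eq_of_le (le_of_lt (hu 1))]; rfl

lemma q_mem (c M : ℚ) : (fun v : Fin 1 → ℚ => lf c (v 0) - M) ∈ CloneC 1 := by
  refine ⟨?_, 0, c, OrderIso.addRight (-M), ?_⟩
  · intro u v h
    show lf c (u 0) - M < lf c (v 0) - M
    have := lf_strictMono c (h 0); linarith
  · intro u hu
    show lf c (u 0) - M = _
    rw [lf_eq_of_le (le_of_lt (hu 0))]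
    simp [sub_eq_add_neg]

lemma G_mem (c M : ℚ) : (fun u : Fin 2 → ℚ => lf c (u 1) - M) ∈ CloneC 2 := by
  refine ⟨?_, 1, c, OrderIso.addRight (-M), ?_⟩
  · intro u v h
    show lf c (u 1) - M < lf c (v 1) - M
    have := lf_strictMono c (h 1); linarith
  · intro u hu
    show lf c (u 1) - M = _
    rw [lf_eq_of_le (le_of_lt (hu 1))]
    simp [sub_eq_add_neg]

lemma xi_congr (H : ProjHom) {n : ℕ} {f₁ f₂ : (Fin n → ℚ) → ℚ} (e : f₁ = f₂)
    (h₁ : f₁ ∈ CloneC n) (h₂ : f₂ ∈ CloneC n) : H.ξ n f₁ h₁ = H.ξ n f₂ h₂ := by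
  subst e; rfl
theorem projHom_not_continuous (H : ProjHom) :
    ∃ (n : ℕ), 2 ≤ n ∧ ∃ (f : (Fin n → ℚ) → ℚ) (hf : f ∈ CloneC n) (i : Fin n),
      i ≠ H.ξ n f hf ∧
      ∀ A : Finset (Fin n → ℚ), ∃ (g : (Fin n → ℚ) → ℚ) (hg : g ∈ CloneC n),
        (∀ u ∈ A, g u = f u) ∧ H.ξ n g hg = i := by
  refine ⟨2, le_refl 2, fun u => u 0, proj_mem 2 0, 1, ?_, ?_⟩
  · rw [H.proj_eq 2 0 (proj_mem 2 0)]; decide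
  · intro A
    -- numeric parameters
    set N : ℕ := A.sup fun u => max ⌈|u 0|⌉₊ ⌈|u 1|⌉₊ with hN
    set a : ℚ := (N : ℚ) + 1 with ha
    set M : ℚ := 2 * a with hM
    set c : ℚ := M + a + 2 with hc
    have haN : (0:ℚ) < a := by rw [ha]; positivity
    -- the approximating function g
    refine ⟨fun u => max (sqz a (u 0)) (u 1 - M), g_mem a M (by linarith), ?_, ?_⟩
    · -- g agrees with the first projection on A
      intro u hu
      have hsup := Finset.le_sup (f := fun u : Fin 2 → ℚ => max ⌈|u 0|⌉₊ ⌈|u 1|⌉₊) hu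
      have h0 : |u 0| ≤ (N : ℚ) := by
        refine le_trans (Nat.le_ceil _) ?_
        exact_mod_cast le_trans (le_max_left _ _) hsup
      have h1 : |u 1| ≤ (N : ℚ) := by
        refine le_trans (Nat.le_ceil _) ?_
        exact_mod_cast le_trans (le_max_right _ _) hsup
      have ha0 := abs_le.mp h0
      have ha1 := abs_le.mp h1
      show max (sqz a (u 0)) (u 1 - M) = u 0
      rw [sq_eq_of_le (by rw [ha]; linarith [ha0.2] : u 0 ≤ a)]
      refine max_eq_left ?_
      rw [hM, ha]; linarith [ha1.2, ha0.1]
    · -- the value of ξ on g is forced to be 1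
      set g : (Fin 2 → ℚ) → ℚ := fun u => max (sqz a (u 0)) (u 1 - M) with hgdef
      have hg : g ∈ CloneC 2 := g_mem a M (by linarith)
      set gg : Fin 2 → ((Fin 2 → ℚ) → ℚ) :=
        fun k => if k = 0 then (fun u => u 0) else (fun u => lf c (u 1)) with hgg
      have hggmem : ∀ k, gg k ∈ CloneC 2 := by
        intro k
        by_cases hk : k = 0
        · simp only [hgg, if_pos hk]; exact proj_mem 2 0
        · simp only [hgg, if_neg hk]; exact lfp_mem c
      have hGeq : (fun u : Fin 2 → ℚ => g (fun k => gg k u))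
          = (fun u : Fin 2 → ℚ => lf c (u 1) - M) := by
        funext u
        have e0 : gg 0 u = u 0 := by
          simp [hgg]
        have e1 : gg 1 u = lf c (u 1) := by
          simp [hgg, show ¬(1 : Fin 2) = 0 from by decide]
        show max (sqz a (gg 0 u)) (gg 1 u - M) = lf c (u 1) - M
        rw [e0, e1]
        refine max_eq_right ?_
        have h2 := sq_lt a (u 0)
        have h3 := lf_gt c (u 1)
        rw [hc] at h3; linarith
      have hGmem : (fun u : Fin 2 → ℚ => g (fun k => gg k u)) ∈ CloneC 2 := by
        rw [hGeq]; exact G_mem c M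
      have comp1 := H.comp_eq 2 2 g hg gg hggmem hGmem
      have comp2 := H.comp_eq 2 1 (fun v : Fin 1 → ℚ => lf c (v 0) - M) (q_mem c M)
        (fun _ => fun u : Fin 2 → ℚ => u 1) (fun _ => proj_mem 2 1) (G_mem c M)
      have e2 : H.ξ 2 (fun u : Fin 2 → ℚ => lf c (u 1) - M) (G_mem c M) = 1 :=
        comp2.trans (H.proj_eq 2 1 _)
      have key : H.ξ 2 (gg (H.ξ 2 g hg)) (hggmem _) = 1 := by
        rw [← comp1, xi_congr H hGeq hGmem (G_mem c M), e2]
      have hk2 : H.ξ 2 g hg = 0 ∨ H.ξ 2 g hg = 1 :=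
        (show ∀ k : Fin 2, k = 0 ∨ k = 1 by decide) _
      rcases hk2 with hk | hk
      · exfalso
        rw [hk] at key
        have e3 : gg 0 = fun u : Fin 2 → ℚ => u 0 := by
          simp [hgg]
        rw [xi_congr H e3 (hggmem 0) (proj_mem 2 0), H.proj_eq 2 0 (proj_mem 2 0)] at key
        exact absurd key (by decide)
      · exact hk
end

section
/- Pol(ℚ,<) has no projective homomorphism: there is no family of maps ξₙ : Polₙ → Fin n (n ≥ 1), where Polₙ is the set of n-ary functions on ℚ preserving <, such that ξₙ(u ↦ u i) = i for every i : Fin n and ξₘ(u ↦ f(g₁ u, …, gₙ u)) = ξₘ(g_{ξₙ(f)}) for all f ∈ Polₙ and g₁, …, gₙ ∈ Polₘ. -/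
theorem pol_no_projective_homomorphism :
    ¬ ∃ ξ : ∀ (n : ℕ) (f : (Fin n → ℚ) → ℚ), PreservesLt f → Fin n,
      (∀ (n : ℕ) (i : Fin n) (h : PreservesLt (fun u : Fin n → ℚ => u i)),
        ξ n (fun u => u i) h = i) ∧
      (∀ (m n : ℕ) (f : (Fin n → ℚ) → ℚ) (hf : PreservesLt f)
        (g : Fin n → ((Fin m → ℚ) → ℚ)) (hg : ∀ k, PreservesLt (g k))
        (hc : PreservesLt (fun u : Fin m → ℚ => f (fun k => g k u))),
        ξ m (fun u => f (fun k => g k u)) hc = ξ m (g (ξ n f hf)) (hg (ξ n f hf))) := by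
  rintro ⟨ξ, hproj, hcomp⟩
  -- auxiliary: ξ respects equality of functions
  have aux : ∀ (f₁ f₂ : (Fin 2 → ℚ) → ℚ) (h₁ : PreservesLt f₁) (h₂ : PreservesLt f₂),
      f₁ = f₂ → ξ 2 f₁ h₁ = ξ 2 f₂ h₂ := by
    rintro f₁ f₂ h₁ h₂ rfl; rfl
  -- binary max
  have hf : PreservesLt (fun u : Fin 2 → ℚ => max (u 0) (u 1)) := by
    intro u v h
    exact max_lt_max (h 0) (h 1)
  set f : (Fin 2 → ℚ) → ℚ := fun u => max (u 0) (u 1) with hfdef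
  -- swapped projections
  have hg : ∀ k : Fin 2, PreservesLt (fun u : Fin 2 → ℚ => u (k + 1)) := by
    intro k u v h
    exact h (k + 1)
  set g : Fin 2 → ((Fin 2 → ℚ) → ℚ) := fun k u => u (k + 1) with hgdef
  have he : (fun u : Fin 2 → ℚ => f (fun k => g k u)) = f := by
    funext u
    show max (u (0 + 1)) (u (1 + 1)) = max (u 0) (u 1)
    have h1 : ((0 : Fin 2) + 1) = 1 := by decide
    have h2 : ((1 : Fin 2) + 1) = 0 := by decide
    rw [h1, h2, max_comm]
  have hc : PreservesLt (fun u : Fin 2 → ℚ => f (fun k => g k u)) := he ▸ hf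
  have key := hcomp 2 2 f hf g hg hc
  set i : Fin 2 := ξ 2 f hf with hi
  have step1 : ξ 2 (fun u : Fin 2 → ℚ => f (fun k => g k u)) hc = i := aux _ _ _ _ he
  have step2 : ξ 2 (g i) (hg i) = i + 1 := hproj 2 (i + 1) (hg i)
  have : i = i + 1 := step1.symm.trans (key.trans step2)
  have : ∀ j : Fin 2, j ≠ j + 1 := by decide
  exact this i ‹i = i + 1›
end

section
/- (ℚ,<) is oligomorphic: for every n ≥ 1, the diagonal action of the group of order automorphisms of ℚ on the set of n-tuples Fin n → ℚ (where α acts by u ↦ α ∘ u) has only finitely many orbits. -/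
/-!
An order automorphism preserves the order type `(i, j) ↦ cmp (u i) (u j)` of a tuple `u`.
Conversely, two tuples of the same order type define a finite partial isomorphism `u i ↦ v i`,
and Cantor's back-and-forth argument, started from it instead of the empty one, extends it to an
automorphism. So orbits correspond to order types, of which there are finitely many.
-/

namespace Order

variable {α β : Type*} [LinearOrder α] [LinearOrder β]

def PartialIso.ofCmpEqCmp {ι : Type*} [Fintype ι] (u : ι → α) (v : ι → β)
    (h : ∀ i j, cmp (u i) (u j) = cmp (v i) (v j)) : PartialIso α β := by
  classical
  exact ⟨Finset.univ.image fun i ↦ (u i, v i), by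
    simp only [Finset.mem_image, Finset.mem_univ, true_and]
    rintro _ ⟨i, rfl⟩ _ ⟨j, rfl⟩
    exact h i j⟩

variable [Countable α] [DenselyOrdered α] [NoMinOrder α] [NoMaxOrder α] [Nonempty α]
  [Countable β] [DenselyOrdered β] [NoMinOrder β] [NoMaxOrder β] [Nonempty β]

theorem PartialIso.exists_orderIso_extends (f : PartialIso α β) :
    ∃ g : α ≃o β, ∀ p ∈ f.val, g p.1 = p.2 := by
  cases nonempty_encodable α
  cases nonempty_encodable β
  let to_cofinal : α ⊕ β → Cofinal (PartialIso α β) := fun p ↦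
    Sum.recOn p (definedAtLeft β) (definedAtRight α)
  let I : Ideal (PartialIso α β) := idealOfCofinals f to_cofinal
  let F a := funOfIdeal a I (cofinal_meets_idealOfCofinals _ to_cofinal (Sum.inl a))
  let G b := invOfIdeal b I (cofinal_meets_idealOfCofinals _ to_cofinal (Sum.inr b))
  have hFG : ∀ a b, cmp a (G b).val = cmp (F a).val b := fun a b ↦ by
    obtain ⟨g, hg, ha⟩ := (F a).prop
    obtain ⟨g', hg', hb⟩ := (G b).prop
    obtain ⟨m, -, gm, g'm⟩ := I.directed _ hg _ hg'
    exact m.prop (a, _) (gm ha) (_, b) (g'm hb)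
  refine ⟨OrderIso.ofCmpEqCmp (fun a ↦ (F a).val) (fun b ↦ (G b).val) hFG, ?_⟩
  rintro ⟨a, b⟩ hab
  obtain ⟨g, hg, ha⟩ := (F a).prop
  obtain ⟨m, -, gm, fm⟩ := I.directed _ hg _ (mem_idealOfCofinals f to_cofinal)
  have hcmp : cmp a a = cmp (F a).val b := m.prop (a, _) (gm ha) (a, b) (fm hab)
  exact (cmp_eq_eq_iff _ _).1 (hcmp.symm.trans (cmp_self_eq_eq a))

theorem exists_orderIso_apply_eq_iff_cmp_eq {ι : Type*} [Fintype ι] (u : ι → α) (v : ι → β) :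
    (∃ g : α ≃o β, ∀ i, g (u i) = v i) ↔ ∀ i j, cmp (u i) (u j) = cmp (v i) (v j) := by
  constructor
  · rintro ⟨g, hg⟩ i j
    rw [← hg i, ← hg j, g.strictMono.cmp_map_eq]
  · intro h
    obtain ⟨g, hg⟩ := (PartialIso.ofCmpEqCmp u v h).exists_orderIso_extends
    classical
    exact ⟨g, fun i ↦ hg (u i, v i) (Finset.mem_image_of_mem _ (Finset.mem_univ i))⟩

theorem finite_orbits_orderIso_pi {ι : Type*} [Fintype ι] :
    Set.Finite {O : Set (ι → α) | ∃ u : ι → α, O = {v | ∃ g : α ≃o α, ∀ i, g (u i) = v i}} := by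
  refine (Set.finite_range fun c : ι → ι → Ordering ↦
    {v : ι → α | ∀ i j, c i j = cmp (v i) (v j)}).subset ?_
  rintro O ⟨u, rfl⟩
  exact ⟨fun i j ↦ cmp (u i) (u j), by simp only [exists_orderIso_apply_eq_iff_cmp_eq]⟩

end Order

theorem rat_order_oligomorphic_general (n : ℕ) :
    Set.Finite {O : Set (Fin n → ℚ) |
      ∃ u : Fin n → ℚ, O = {v | ∃ α : ℚ ≃o ℚ, ∀ i, α (u i) = v i}} :=
  Order.finite_orbits_orderIso_pi

theorem rat_order_oligomorphic (n : ℕ) (hn : 1 ≤ n) :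
    Set.Finite {O : Set (Fin n → ℚ) |
      ∃ u : Fin n → ℚ, O = {v | ∃ α : ℚ ≃o ℚ, ∀ i, α (u i) = v i}} :=
  rat_order_oligomorphic_general n
end
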